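/- arXiv:1705.02242 — 2 statements merged into one kernel-verified Lean document; each statement's English description precedes it below -/
import Mathlib

section
/- Let m_e, m_l be positive integers and let gamma_e, gamma_l, gamma_P, gamma_R, Theta be positive reals. Let E and L be independent random variables where E is Gamma-distributed with shape m_e and scale gamma_e/m_e and L is Gamma-distributed with shape m_l and scale gamma_l/m_l. Set a = m_e*Theta/(gamma_e*gamma_P). Then P( gamma_P * E / (gamma_R * L + 1) <= Theta ) = 1 - exp(-a) * sum_{l=0}^{m_e-1} (a^l / l!) * sum_{i=0}^{l} C(l,i) * gamma_R^{l-i} * [ m_l^{m_l} / (Gamma(m_l) * gamma_l^{m_l}) ] * (m_l + l - i - 1)! * ( a*gamma_R + m_l/gamma_l )^{-(m_l + l - i)}, where C(n,k) denotes the binomial coefficient and Gamma is the Gamma function. -/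
/-!
Conditionally on `L = y`, the outage event is `E ≤ Θ (γR y + 1) / γP`, and for integer shape
the Gamma CDF is the Erlang formula `1 - e^{-x} ∑_{l < m} x^l / l!`, here at `x = a (γR y + 1)`.
Splitting `e^{-a (γR y + 1)} = e^{-a} e^{-a γR y}` and expanding `(γR y + 1)^l` binomially leaves
only the Gamma integrals `∫ y^k e^{-c y} dΓ(n, r) = r^n Γ(n + k) / (Γ(n) (r + c)^(n + k))`.
-/

open MeasureTheory ProbabilityTheory Real Finset Set
open scoped Nat

lemma hasDerivAt_exp_neg_mul_sum_pow_div_factorial (k : ℕ) (x : ℝ) :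
    HasDerivAt (fun x => exp (-x) * ∑ l ∈ range (k + 1), x ^ l / l !)
      (-(exp (-x) * x ^ k / k !)) x := by
  induction k with
  | zero => simpa using (hasDerivAt_neg x).exp
  | succ k ih =>
    simp_rw [sum_range_succ _ (k + 1), mul_add]
    refine (ih.fun_add ((hasDerivAt_neg x).exp.fun_mul
      ((hasDerivAt_pow (k + 1) x).div_const ((k + 1)! : ℝ)))).congr_deriv ?_
    rw [Nat.factorial_succ, Nat.add_sub_cancel]
    push_cast
    field_simp
    ring

lemma gammaPDFReal_natCast_add_one (k : ℕ) {r x : ℝ} (hx : 0 ≤ x) :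
    gammaPDFReal (k + 1 : ℕ) r x = r ^ (k + 1) / k ! * x ^ k * exp (-(r * x)) := by
  rw [gammaPDFReal, if_pos hx, rpow_natCast, show ((k + 1 : ℕ) : ℝ) - 1 = k by push_cast; ring,
    rpow_natCast, Nat.cast_succ, Gamma_nat_eq_factorial]

lemma cdf_gammaMeasure_natCast {n : ℕ} (hn : 0 < n) {r t : ℝ} (hr : 0 < r) (ht : 0 ≤ t) :
    cdf (gammaMeasure n r) t = 1 - exp (-(r * t)) * ∑ l ∈ range n, (r * t) ^ l / l ! := by
  obtain ⟨k, rfl⟩ : ∃ k, n = k + 1 := ⟨n - 1, by omega⟩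
  have hderiv : ∀ x, HasDerivAt
      (fun x => -(exp (-(r * x)) * ∑ l ∈ range (k + 1), (r * x) ^ l / l !))
      (r ^ (k + 1) / k ! * x ^ k * exp (-(r * x))) x := fun x =>
    ((hasDerivAt_exp_neg_mul_sum_pow_div_factorial k (r * x)).comp x
      ((hasDerivAt_id' x).const_mul r)).neg.congr_deriv (by rw [mul_pow, pow_succ]; ring)
  have hpdf : EqOn (gammaPDFReal (k + 1 : ℕ) r)
      (fun x => r ^ (k + 1) / k ! * x ^ k * exp (-(r * x))) (uIcc 0 t) := fun x hx =>
    gammaPDFReal_natCast_add_one k (uIcc_of_le ht ▸ hx).1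
  rw [cdf_gammaMeasure_eq_integral (by positivity) hr,
    setIntegral_eq_of_subset_of_forall_sdiff_eq_zero measurableSet_Iic Icc_subset_Iic_self,
    integral_Icc_eq_integral_Ioc, ← intervalIntegral.integral_of_le ht,
    intervalIntegral.integral_congr hpdf,
    intervalIntegral.integral_eq_sub_of_hasDerivAt (fun x _ => hderiv x)
      ((by fun_prop : Continuous _).intervalIntegrable 0 t)]
  · have hF0 : exp (-(r * 0)) * ∑ l ∈ range (k + 1), (r * 0) ^ l / l ! = 1 := by
      simp [sum_range_succ']
    rw [hF0]
    ring
  · rintro x ⟨hxt, hx0⟩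
    simp [gammaPDFReal, show ¬ 0 ≤ x from fun h => hx0 ⟨h, hxt⟩]

lemma integral_gammaMeasure_eq_setIntegral {a r : ℝ} (ha : 0 < a) (hr : 0 < r) (f : ℝ → ℝ) :
    ∫ y, f y ∂gammaMeasure a r = ∫ y in Ioi 0, gammaPDFReal a r y * f y := by
  rw [gammaMeasure, integral_withDensity_eq_integral_toReal_smul (f := gammaPDF a r)
    (measurable_gammaPDFReal a r).ennreal_ofReal (ae_of_all _ fun _ => ENNReal.ofReal_lt_top)]
  simp only [gammaPDF, ENNReal.toReal_ofReal (gammaPDFReal_nonneg ha hr _), smul_eq_mul]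
  rw [← integral_Ici_eq_integral_Ioi, setIntegral_eq_integral_of_forall_compl_eq_zero]
  intro y hy
  simp [gammaPDFReal, show ¬ 0 ≤ y from hy]

lemma integral_gammaMeasure_pow_mul_exp_neg {a r c : ℝ} (ha : 0 < a) (hr : 0 < r)
    (hrc : 0 < r + c) (k : ℕ) :
    ∫ y, y ^ k * exp (-(c * y)) ∂gammaMeasure a r
      = r ^ a / Gamma a * Gamma (a + k) / (r + c) ^ (a + k) := by
  rw [integral_gammaMeasure_eq_setIntegral ha hr]
  have hpt : ∀ y ∈ Ioi (0 : ℝ), gammaPDFReal a r y * (y ^ k * exp (-(c * y)))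
      = r ^ a / Gamma a * (y ^ (a + k - 1) * exp (-((r + c) * y))) := by
    intro y (hy : 0 < y)
    rw [gammaPDFReal, if_pos hy.le, show a + k - 1 = (a - 1) + k by ring, rpow_add hy,
      rpow_natCast, add_mul, neg_add, exp_add]
    ring
  rw [setIntegral_congr_fun measurableSet_Ioi hpt, integral_const_mul,
    integral_rpow_mul_exp_neg_mul_Ioi (by positivity) hrc, div_rpow zero_le_one hrc.le, one_rpow]
  ring

lemma integral_gammaMeasure_natCast_pow_mul_exp_neg {n : ℕ} (hn : 0 < n) {r c : ℝ} (hr : 0 < r)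
    (hrc : 0 < r + c) (k : ℕ) :
    ∫ y, y ^ k * exp (-(c * y)) ∂gammaMeasure n r
      = r ^ n / Gamma n * (n + k - 1)! / (r + c) ^ (n + k) := by
  have hfact : Gamma (n + k : ℝ) = (n + k - 1)! := by
    obtain ⟨j, hj⟩ : ∃ j, n + k = j + 1 := ⟨n + k - 1, by omega⟩
    rw [← Nat.cast_add, hj, Nat.cast_succ, Gamma_nat_eq_factorial, Nat.add_sub_cancel]
  rw [integral_gammaMeasure_pow_mul_exp_neg (by positivity) hr hrc, rpow_natCast, hfact,
    ← Nat.cast_add, rpow_natCast]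

lemma integral_gammaMeasure_one_sub_exp_neg_mul_sum {m n : ℕ} (hn : 0 < n) {r a b : ℝ}
    (hr : 0 < r) (hrab : 0 < a * b + r) :
    ∫ y, (1 - exp (-(a * (b * y + 1))) * ∑ l ∈ range m, (a * (b * y + 1)) ^ l / l !)
        ∂gammaMeasure n r
      = 1 - exp (-a) * ∑ l ∈ range m, (a ^ l / l !) * ∑ i ∈ range (l + 1),
          (l.choose i : ℝ) * b ^ (l - i) * (r ^ n / Gamma n) * (n + l - i - 1)! *
            (a * b + r) ^ (-((n : ℤ) + l - i)) := by
  have := isProbabilityMeasure_gammaMeasure (Nat.cast_pos.2 hn) hr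
  have hmoment (k : ℕ) := integral_gammaMeasure_natCast_pow_mul_exp_neg hn hr
    (c := a * b) (by linarith) k
  -- a Bochner integral that is nonzero certifies integrability
  have hintegrable (k : ℕ) :
      Integrable (fun y => y ^ k * exp (-(a * b * y))) (gammaMeasure n r) :=
    Integrable.of_integral_ne_zero <| by
      rw [hmoment]
      exact (div_pos (by positivity) (pow_pos (by linarith) _)).ne'
  have hexpand (y : ℝ) : exp (-(a * (b * y + 1))) * ∑ l ∈ range m, (a * (b * y + 1)) ^ l / l !
      = ∑ l ∈ range m, ∑ i ∈ range (l + 1),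
          exp (-a) * (a ^ l / l !) * (l.choose i * b ^ (l - i)) *
            (y ^ (l - i) * exp (-(a * b * y))) := by
    rw [mul_sum]
    refine sum_congr rfl fun l _ => ?_
    have hexp : exp (-(a * (1 + b * y))) = exp (-a) * exp (-(a * b * y)) := by
      rw [← exp_add]
      ring_nf
    rw [add_comm (b * y), hexp, mul_pow, add_pow, mul_sum, sum_div, mul_sum]
    refine sum_congr rfl fun i _ => ?_
    rw [one_pow, mul_pow]
    ring
  simp_rw [hexpand]
  rw [integral_sub (integrable_const 1) (integrable_finsetSum _ fun l _ =>
      integrable_finsetSum _ fun i _ => (hintegrable _).const_mul _),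
    integral_const, probReal_univ, one_smul, integral_finsetSum _ fun l _ =>
      integrable_finsetSum _ fun i _ => (hintegrable _).const_mul _, mul_sum]
  congr 1
  refine sum_congr rfl fun l _ => ?_
  rw [integral_finsetSum _ fun i _ => (hintegrable _).const_mul _, mul_sum, mul_sum]
  refine sum_congr rfl fun i hi => ?_
  have hil : i ≤ l := Nat.lt_succ_iff.1 (mem_range.1 hi)
  rw [integral_const_mul, hmoment, ← Nat.add_sub_assoc hil, zpow_neg,
    show (n : ℤ) + l - i = ((n + l - i : ℕ) : ℤ) by omega, zpow_natCast]
  ring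

lemma measureReal_preimage_prodMk_eq_integral_of_indepFun {Ω α β : Type*} [MeasurableSpace Ω]
    [MeasurableSpace α] [MeasurableSpace β] {μ : Measure Ω} [IsFiniteMeasure μ]
    {X : Ω → α} {Y : Ω → β} (hX : Measurable X) (hY : Measurable Y) (hXY : IndepFun X Y μ)
    {s : Set (α × β)} (hs : MeasurableSet s) :
    μ.real ((fun ω => (X ω, Y ω)) ⁻¹' s)
      = ∫ y, (μ.map X).real ((·, y) ⁻¹' s) ∂μ.map Y := by
  rw [measureReal_def, ← Measure.map_apply (hX.prodMk hY) hs,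
    (indepFun_iff_map_prod_eq_prod_map_map hX.aemeasurable hY.aemeasurable).1 hXY,
    Measure.prod_apply_symm hs, ← integral_toReal
      (measurable_measure_prodMk_right hs).aemeasurable
      (ae_of_all _ fun _ => measure_lt_top _ _)]
  rfl

/-- Closed-form primary outage probability in the broadcast phase,
`P(γP·E/(γR·L + 1) ≤ Θ)` for independent Gamma-distributed `E` and `L`. -/
theorem primary_outage_bc_closed_form
    {Ω : Type*} [MeasurableSpace Ω] (μ : Measure Ω) [IsProbabilityMeasure μ]
    (m_e m_l : ℕ) (hme : 0 < m_e) (hml : 0 < m_l)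
    (γe γl γP γR Θ : ℝ)
    (hγe : 0 < γe) (hγl : 0 < γl) (hγP : 0 < γP) (hγR : 0 < γR) (hΘ : 0 < Θ)
    (E L : Ω → ℝ) (hE : Measurable E) (hL : Measurable L)
    (hEd : μ.map E = gammaMeasure m_e ((m_e : ℝ) / γe))
    (hLd : μ.map L = gammaMeasure m_l ((m_l : ℝ) / γl))
    (hindep : IndepFun E L μ) :
    (μ {ω | γP * E ω / (γR * L ω + 1) ≤ Θ}).toReal =
      1 - Real.exp (-((m_e : ℝ) * Θ / (γe * γP))) *
        ∑ l ∈ Finset.range m_e,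
          (((m_e : ℝ) * Θ / (γe * γP)) ^ l / (Nat.factorial l : ℝ)) *
          ∑ i ∈ Finset.range (l + 1),
            (l.choose i : ℝ) * γR ^ (l - i) *
            ((m_l : ℝ) ^ m_l / (Real.Gamma m_l * γl ^ m_l)) *
            (Nat.factorial (m_l + l - i - 1) : ℝ) *
            (((m_e : ℝ) * Θ / (γe * γP)) * γR + (m_l : ℝ) / γl) ^ (-((m_l : ℤ) + l - i)) := by
  set a := (m_e : ℝ) * Θ / (γe * γP)
  set S := {p : ℝ × ℝ | γP * p.1 / (γR * p.2 + 1) ≤ Θ}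
  have hS : MeasurableSet S := measurableSet_le (by fun_prop) measurable_const
  have hslice : ∀ y ∈ Ioi (0 : ℝ), (μ.map E).real ((·, y) ⁻¹' S)
      = 1 - exp (-(a * (γR * y + 1))) * ∑ l ∈ range m_e, (a * (γR * y + 1)) ^ l / l ! := by
    intro y (hy : 0 < y)
    have hpos : 0 < γR * y + 1 := by positivity
    have hIic : (·, y) ⁻¹' S = Iic (Θ * (γR * y + 1) / γP) := by
      ext x
      change γP * x / (γR * y + 1) ≤ Θ ↔ x ≤ Θ * (γR * y + 1) / γP
      rw [div_le_iff₀ hpos, le_div_iff₀ hγP, mul_comm x]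
    have hrate : (m_e : ℝ) / γe * (Θ * (γR * y + 1) / γP) = a * (γR * y + 1) := by
      simp only [a]
      field_simp
    have := isProbabilityMeasure_gammaMeasure (Nat.cast_pos.2 hme)
      (by positivity : 0 < (m_e : ℝ) / γe)
    rw [hEd, hIic, ← cdf_eq_real, cdf_gammaMeasure_natCast hme (by positivity) (by positivity),
      hrate]
  have hrate_l : 0 < (m_l : ℝ) / γl := by positivity
  have hml' : (0 : ℝ) < m_l := Nat.cast_pos.2 hml
  calc (μ {ω | γP * E ω / (γR * L ω + 1) ≤ Θ}).toReal
      = μ.real ((fun ω => (E ω, L ω)) ⁻¹' S) := rfl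
    _ = ∫ y, (μ.map E).real ((·, y) ⁻¹' S) ∂gammaMeasure m_l ((m_l : ℝ) / γl) := by
      rw [measureReal_preimage_prodMk_eq_integral_of_indepFun hE hL hindep hS, hLd]
    _ = ∫ y, (1 - exp (-(a * (γR * y + 1))) * ∑ l ∈ range m_e, (a * (γR * y + 1)) ^ l / l !)
          ∂gammaMeasure m_l ((m_l : ℝ) / γl) := by
      rw [integral_gammaMeasure_eq_setIntegral hml' hrate_l,
        integral_gammaMeasure_eq_setIntegral hml' hrate_l]
      exact setIntegral_congr_fun measurableSet_Ioi fun y hy => by rw [hslice y hy]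
    _ = _ := by
      rw [integral_gammaMeasure_one_sub_exp_neg_mul_sum hml hrate_l (by positivity), div_pow,
        div_div, mul_comm (γl ^ m_l)]
end

section
/- Let m_x, m_y, m_z be positive integers, s_x, s_y, s_z > 0, and let X, Y, Z be independent random variables, Gamma-distributed with shapes m_x, m_y, m_z and scales s_x, s_y, s_z respectively. Then for any theta > 0 and c > 0: P( X > theta*(Y + Z + c) ) = exp( - theta*c/s_x ) * sum_{n=0}^{m_x-1} [ (theta/s_x)^n / n! ] * sum_{i1=0}^{n} sum_{i2=0}^{n-i1} C(n,i1) * C(n-i1,i2) * c^{n-i1-i2} * [ Gamma(m_y + i1) / (Gamma(m_y) * s_y^{m_y}) ] * ( theta/s_x + 1/s_y )^{-(m_y+i1)} * [ Gamma(m_z + i2) / (Gamma(m_z) * s_z^{m_z}) ] * ( theta/s_x + 1/s_z )^{-(m_z+i2)}, where C(n,k) denotes the binomial coefficient and Gamma is the Gamma function. -/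
/-! For an integer shape `m` the Gamma law has the Erlang tail
`P(X > t) = e^{-rt} ∑_{n<m} (rt)^n / n!` (r the rate), obtained from an explicit antiderivative of
the density. By independence, `P(X > θ(Y + Z + c))` is the expectation of this tail at
`t = θ(Y + Z + c)`. Expanding `(Y + Z + c)^n` twice by the binomial theorem leaves products
`Y^i e^{-bY} · Z^j e^{-bZ}` with `b = rθ`, whose expectations factor, and each factor is a Gamma
integral: `y^i e^{-by}` times the Gamma(a, r) density is a constant multiple of the
Gamma(a + i, b + r) density. -/

open MeasureTheory ProbabilityTheory Real Finset Set Filter Topology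
open scoped Nat

lemma measurable_gammaPDF (a r : ℝ) : Measurable (gammaPDF a r) :=
  (measurable_gammaPDFReal a r).ennreal_ofReal

lemma ae_nonneg_gammaMeasure (a r : ℝ) : ∀ᵐ x ∂gammaMeasure a r, 0 ≤ x := by
  rw [gammaMeasure, ae_withDensity_iff (measurable_gammaPDF a r)]
  exact ae_of_all _ fun x hx => not_lt.mp fun hneg => hx (gammaPDF_of_neg hneg)

lemma hasDerivAt_exp_neg_mul_mul_sum_range (k : ℕ) (r x : ℝ) :
    HasDerivAt (fun t => exp (-(r * t)) * ∑ n ∈ range (k + 1), (r * t) ^ n / n !)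
      (-(exp (-(r * x)) * (r * (r * x) ^ k / k !))) x := by
  have hexp : HasDerivAt (fun t => exp (-(r * t))) (exp (-(r * x)) * -r) x := by
    simpa using ((hasDerivAt_id x).const_mul r).neg.exp
  induction k with
  | zero => simpa using hexp
  | succ k ih =>
    have hpow : HasDerivAt (fun t => (r * t) ^ (k + 1) / (k + 1)!)
        ((k + 1) * (r * x) ^ k * r / (k + 1)!) x := by
      simpa using (((hasDerivAt_id x).const_mul r).pow (k + 1)).div_const ((k + 1)! : ℝ)
    simp only [sum_range_succ _ (k + 1), mul_add]
    refine (ih.add (hexp.mul hpow)).congr_deriv ?_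
    rw [Nat.factorial_succ]
    push_cast
    field_simp
    ring

lemma tendsto_exp_neg_mul_mul_sum_range (k : ℕ) {r : ℝ} (hr : 0 < r) :
    Tendsto (fun t => exp (-(r * t)) * ∑ n ∈ range (k + 1), (r * t) ^ n / n !)
      atTop (𝓝 0) := by
  have h : Tendsto (fun u : ℝ => ∑ n ∈ range (k + 1), u ^ n * exp (-u) / n !)
      atTop (𝓝 0) := by
    simpa using tendsto_finsetSum (range (k + 1)) fun n _ =>
      (tendsto_pow_mul_exp_neg_atTop_nhds_zero n).div_const (n ! : ℝ)
  refine (h.comp (tendsto_id.const_mul_atTop hr)).congr fun t => ?_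
  simp only [Function.comp, id, mul_sum]
  exact sum_congr rfl fun n _ => by ring

lemma gammaPDFReal_natCast_succ (k : ℕ) (r : ℝ) {x : ℝ} (hx : 0 ≤ x) :
    gammaPDFReal (k + 1) r x = exp (-(r * x)) * (r * (r * x) ^ k / k !) := by
  rw [gammaPDFReal, if_pos hx, add_sub_cancel_right, Gamma_nat_eq_factorial, ← Nat.cast_succ,
    rpow_natCast, rpow_natCast, mul_pow, pow_succ]
  ring

lemma gammaMeasure_real_Ioi_natCast {m : ℕ} (hm : 0 < m) {r t : ℝ} (hr : 0 < r) (ht : 0 ≤ t) :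
    (gammaMeasure m r).real (Ioi t) = exp (-(r * t)) * ∑ n ∈ range m, (r * t) ^ n / n ! := by
  obtain ⟨k, rfl⟩ : ∃ k, m = k + 1 := ⟨m - 1, by omega⟩
  have hpdf : ∀ x ∈ Ioi t, gammaPDFReal (k + 1 : ℕ) r x
      = exp (-(r * x)) * (r * (r * x) ^ k / k !) := fun x hx => by
    push_cast; exact gammaPDFReal_natCast_succ k r (ht.trans hx.le)
  have hnonneg : ∀ x ∈ Ioi t, 0 ≤ exp (-(r * x)) * (r * (r * x) ^ k / k !) := fun x hx => by
    have : 0 ≤ r * x := mul_nonneg hr.le (ht.trans hx.le)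
    positivity
  rw [measureReal_def, gammaMeasure, withDensity_apply _ measurableSet_Ioi]
  unfold gammaPDF
  rw [← integral_eq_lintegral_of_nonneg_ae
      (ae_of_all _ fun x => gammaPDFReal_nonneg (by positivity) hr x) (by fun_prop),
    setIntegral_congr_fun measurableSet_Ioi hpdf,
    integral_Ioi_of_hasDerivAt_of_nonneg' (fun x _ =>
      (hasDerivAt_exp_neg_mul_mul_sum_range k r x).neg.congr_deriv (neg_neg _))
      hnonneg (tendsto_exp_neg_mul_mul_sum_range k hr).neg]
  simp

section Moments

variable {a r b : ℝ}

lemma gammaPDFReal_mul_pow_mul_exp_neg_mul (ha : 0 < a) (hbr : 0 < b + r) (i : ℕ) {x : ℝ}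
    (hx : x ≠ 0) :
    gammaPDFReal a r x * (x ^ i * exp (-(b * x))) =
      r ^ a * Gamma (a + i) / (Gamma a * (b + r) ^ (a + i)) * gammaPDFReal (a + i) (b + r) x := by
  have hG : Gamma (a + i) ≠ 0 := (Gamma_pos_of_pos (by positivity)).ne'
  have hbr' : (b + r) ^ (a + i) ≠ 0 := (rpow_pos_of_pos hbr _).ne'
  unfold gammaPDFReal
  split_ifs with hx0
  · have hexp : exp (-((b + r) * x)) = exp (-(r * x)) * exp (-(b * x)) := by
      rw [← exp_add]; ring_nf
    rw [add_sub_right_comm, rpow_add_natCast hx, hexp]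
    field_simp
  · simp

lemma lintegral_pow_mul_exp_neg_mul_gammaMeasure (ha : 0 < a) (hr : 0 < r) (hbr : 0 < b + r)
    (i : ℕ) :
    ∫⁻ x, ENNReal.ofReal (x ^ i * exp (-(b * x))) ∂gammaMeasure a r =
      ENNReal.ofReal (r ^ a * Gamma (a + i) / (Gamma a * (b + r) ^ (a + i))) := by
  have hC : 0 ≤ r ^ a * Gamma (a + i) / (Gamma a * (b + r) ^ (a + i)) := by
    have := Gamma_pos_of_pos ha
    have := Gamma_pos_of_pos (show 0 < a + i by positivity)
    positivity
  have hne : ∀ᵐ x ∂(volume : Measure ℝ), x ≠ 0 :=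
    compl_mem_ae_iff.mpr (measure_singleton 0)
  rw [gammaMeasure, lintegral_withDensity_eq_lintegral_mul _ (measurable_gammaPDF a r)
    (by fun_prop)]
  calc ∫⁻ x, gammaPDF a r x * ENNReal.ofReal (x ^ i * exp (-(b * x)))
      = ∫⁻ x, ENNReal.ofReal (r ^ a * Gamma (a + i) / (Gamma a * (b + r) ^ (a + i)))
          * gammaPDF (a + i) (b + r) x := by
        refine lintegral_congr_ae (hne.mono fun x hx => ?_)
        dsimp only [gammaPDF]
        rw [← ENNReal.ofReal_mul (gammaPDFReal_nonneg ha hr x),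
          ← ENNReal.ofReal_mul hC, gammaPDFReal_mul_pow_mul_exp_neg_mul ha hbr i hx]
    _ = _ := by
        rw [lintegral_const_mul _ (measurable_gammaPDF _ _),
          lintegral_gammaPDF_eq_one (by positivity) hbr, mul_one]

lemma integrable_pow_mul_exp_neg_mul_gammaMeasure (ha : 0 < a) (hr : 0 < r) (hbr : 0 < b + r)
    (i : ℕ) : Integrable (fun x => x ^ i * exp (-(b * x))) (gammaMeasure a r) := by
  refine ⟨by fun_prop, (hasFiniteIntegral_iff_ofReal ?_).mpr ?_⟩
  · filter_upwards [ae_nonneg_gammaMeasure a r] with x hx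
    positivity
  · rw [lintegral_pow_mul_exp_neg_mul_gammaMeasure ha hr hbr]
    exact ENNReal.ofReal_lt_top

lemma integral_pow_mul_exp_neg_mul_gammaMeasure (ha : 0 < a) (hr : 0 < r) (hbr : 0 < b + r)
    (i : ℕ) :
    ∫ x, x ^ i * exp (-(b * x)) ∂gammaMeasure a r =
      r ^ a * Gamma (a + i) / (Gamma a * (b + r) ^ (a + i)) := by
  rw [integral_eq_lintegral_of_nonneg_ae _ (by fun_prop),
    lintegral_pow_mul_exp_neg_mul_gammaMeasure ha hr hbr, ENNReal.toReal_ofReal]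
  · have := Gamma_pos_of_pos ha
    have := Gamma_pos_of_pos (show 0 < a + i by positivity)
    positivity
  · filter_upwards [ae_nonneg_gammaMeasure a r] with x hx
    positivity

end Moments

lemma exp_neg_mul_mul_sum_range_add_add (b c y z : ℝ) (m : ℕ) :
    exp (-(b * (y + z + c))) * ∑ n ∈ range m, (b * (y + z + c)) ^ n / n ! =
      exp (-(b * c)) * ∑ n ∈ range m, b ^ n / n ! *
        ∑ i ∈ range (n + 1), ∑ j ∈ range (n - i + 1),
          (n.choose i : ℝ) * (n - i).choose j * c ^ (n - i - j) *
            ((y ^ i * exp (-(b * y))) * (z ^ j * exp (-(b * z)))) := by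
  have hexp : exp (-(b * (y + z + c))) = exp (-(b * c)) * (exp (-(b * y)) * exp (-(b * z))) := by
    simp only [← exp_add]; ring_nf
  rw [hexp, mul_assoc, mul_sum]
  congr 1
  refine sum_congr rfl fun n _ => ?_
  rw [mul_pow, add_assoc, add_pow]
  simp only [add_pow, mul_sum, sum_mul, sum_div]
  exact sum_congr rfl fun i _ => sum_congr rfl fun j _ => by ring

lemma ProbabilityTheory.IndepFun.measureReal_lt_eq_integral {Ω β : Type*} [MeasurableSpace Ω]
    [MeasurableSpace β] {μ : Measure Ω} [IsFiniteMeasure μ] {W : Ω → β} {X : Ω → ℝ}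
    (hWX : IndepFun W X μ) (hW : Measurable W) (hX : Measurable X) {g : β → ℝ}
    (hg : Measurable g) :
    μ.real {ω | g (W ω) < X ω} = ∫ w, (μ.map X).real (Ioi (g w)) ∂(μ.map W) := by
  have hs : MeasurableSet {p : β × ℝ | g p.1 < p.2} :=
    measurableSet_lt (hg.comp measurable_fst) measurable_snd
  rw [measureReal_def,
    show {ω | g (W ω) < X ω} = (fun ω => (W ω, X ω)) ⁻¹' {p | g p.1 < p.2} from rfl,
    ← Measure.map_apply (hW.prodMk hX) hs,
    hWX.map_prod_eq_prod_map_map hW.aemeasurable hX.aemeasurable, Measure.prod_apply hs,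
    ← integral_toReal (measurable_measure_prodMk_left hs).aemeasurable
      (ae_of_all _ fun _ => measure_lt_top _ _)]
  rfl

theorem integral_gammaMeasure_real_Ioi_mul_add_add {m : ℕ} (hm : 0 < m)
    {r θ c a₁ r₁ a₂ r₂ : ℝ} (hr : 0 < r) (hθ : 0 ≤ θ) (hc : 0 ≤ c)
    (ha₁ : 0 < a₁) (hr₁ : 0 < r₁) (ha₂ : 0 < a₂) (hr₂ : 0 < r₂) :
    ∫ w, (gammaMeasure m r).real (Ioi (θ * (w.1 + w.2 + c)))
        ∂(gammaMeasure a₁ r₁).prod (gammaMeasure a₂ r₂) =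
      exp (-(r * θ * c)) * ∑ n ∈ range m, (r * θ) ^ n / n ! *
        ∑ i ∈ range (n + 1), ∑ j ∈ range (n - i + 1),
          (n.choose i : ℝ) * (n - i).choose j * c ^ (n - i - j) *
            (r₁ ^ a₁ * Gamma (a₁ + i) / (Gamma a₁ * (r * θ + r₁) ^ (a₁ + i)) *
              (r₂ ^ a₂ * Gamma (a₂ + j) / (Gamma a₂ * (r * θ + r₂) ^ (a₂ + j)))) := by
  have := isProbabilityMeasure_gammaMeasure ha₁ hr₁
  have := isProbabilityMeasure_gammaMeasure ha₂ hr₂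
  set b := r * θ
  have hb₁ : 0 < b + r₁ := by positivity
  have hb₂ : 0 < b + r₂ := by positivity
  have hfg : ∀ i j, Integrable (fun w : ℝ × ℝ => w.1 ^ i * exp (-(b * w.1)) *
      (w.2 ^ j * exp (-(b * w.2)))) ((gammaMeasure a₁ r₁).prod (gammaMeasure a₂ r₂)) :=
    fun i j => (integrable_pow_mul_exp_neg_mul_gammaMeasure ha₁ hr₁ hb₁ i).mul_prod
      (integrable_pow_mul_exp_neg_mul_gammaMeasure ha₂ hr₂ hb₂ j)
  have hprod : ∀ i j : ℕ,
      ∫ w, w.1 ^ i * exp (-(b * w.1)) * (w.2 ^ j * exp (-(b * w.2)))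
        ∂(gammaMeasure a₁ r₁).prod (gammaMeasure a₂ r₂) =
      r₁ ^ a₁ * Gamma (a₁ + i) / (Gamma a₁ * (b + r₁) ^ (a₁ + i)) *
        (r₂ ^ a₂ * Gamma (a₂ + j) / (Gamma a₂ * (b + r₂) ^ (a₂ + j))) := fun i j => by
    rw [integral_prod_mul (fun y => y ^ i * exp (-(b * y))) (fun z => z ^ j * exp (-(b * z))),
      integral_pow_mul_exp_neg_mul_gammaMeasure ha₁ hr₁ hb₁,
      integral_pow_mul_exp_neg_mul_gammaMeasure ha₂ hr₂ hb₂]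
  have hnonneg : ∀ᵐ w ∂(gammaMeasure a₁ r₁).prod (gammaMeasure a₂ r₂),
      0 ≤ w.1 ∧ 0 ≤ w.2 :=
    (Measure.quasiMeasurePreserving_fst.ae (ae_nonneg_gammaMeasure a₁ r₁)).and
      (Measure.quasiMeasurePreserving_snd.ae (ae_nonneg_gammaMeasure a₂ r₂))
  calc _ = ∫ w, exp (-(b * c)) * ∑ n ∈ range m, b ^ n / n ! *
        ∑ i ∈ range (n + 1), ∑ j ∈ range (n - i + 1),
          (n.choose i : ℝ) * (n - i).choose j * c ^ (n - i - j) *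
            ((w.1 ^ i * exp (-(b * w.1))) * (w.2 ^ j * exp (-(b * w.2))))
        ∂(gammaMeasure a₁ r₁).prod (gammaMeasure a₂ r₂) := by
        refine integral_congr_ae (hnonneg.mono fun w ⟨hy, hz⟩ => ?_)
        dsimp only
        rw [gammaMeasure_real_Ioi_natCast hm hr (by positivity), ← mul_assoc,
          exp_neg_mul_mul_sum_range_add_add]
    _ = _ := by
        simp (disch := fun_prop) only [integral_const_mul, integral_finsetSum, hprod]

lemma one_div_rpow_mul_Gamma_div_eq (m i : ℕ) (s b : ℝ) :
    (1 / s) ^ (m : ℝ) * Gamma (m + i) / (Gamma m * (b + 1 / s) ^ ((m : ℝ) + i)) =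
      Gamma (m + i) / (Gamma m * s ^ m) * (b + 1 / s) ^ (-((m : ℤ) + i)) := by
  rw [rpow_natCast, ← Nat.cast_add, rpow_natCast, ← Nat.cast_add, zpow_neg, zpow_natCast]
  ring

/-- Evaluation of χ₁: for independent Gamma variables `X, Y, Z`,
`P(X > θ(Y + Z + c))` in closed form. -/
theorem chi_one_closed_form
    {Ω : Type*} [MeasurableSpace Ω] (μ : Measure Ω) [IsProbabilityMeasure μ]
    (m_x m_y m_z : ℕ) (hmx : 0 < m_x) (hmy : 0 < m_y) (hmz : 0 < m_z)
    (s_x s_y s_z : ℝ) (hsx : 0 < s_x) (hsy : 0 < s_y) (hsz : 0 < s_z)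
    (X Y Z : Ω → ℝ) (hX : Measurable X) (hY : Measurable Y) (hZ : Measurable Z)
    (hXd : μ.map X = gammaMeasure m_x (1 / s_x))
    (hYd : μ.map Y = gammaMeasure m_y (1 / s_y))
    (hZd : μ.map Z = gammaMeasure m_z (1 / s_z))
    (hindep : iIndepFun ![X, Y, Z] μ)
    (θ c : ℝ) (hθ : 0 < θ) (hc : 0 < c) :
    (μ {ω | X ω > θ * (Y ω + Z ω + c)}).toReal =
      Real.exp (-(θ * c / s_x)) *
        ∑ n ∈ Finset.range m_x, ((θ / s_x) ^ n / (Nat.factorial n : ℝ)) *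
          ∑ i1 ∈ Finset.range (n + 1), ∑ i2 ∈ Finset.range (n - i1 + 1),
            (n.choose i1 : ℝ) * ((n - i1).choose i2 : ℝ) * c ^ (n - i1 - i2) *
            (Real.Gamma ((m_y : ℝ) + i1) / (Real.Gamma m_y * s_y ^ m_y)) *
            (θ / s_x + 1 / s_y) ^ (-((m_y : ℤ) + i1)) *
            (Real.Gamma ((m_z : ℝ) + i2) / (Real.Gamma m_z * s_z ^ m_z)) *
            (θ / s_x + 1 / s_z) ^ (-((m_z : ℤ) + i2)) := by
  have hmeas : ∀ i, Measurable (![X, Y, Z] i) := fun i => by fin_cases i <;> assumption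
  have hYZ_X : IndepFun (fun ω => (Y ω, Z ω)) X μ := by
    simpa using hindep.indepFun_prodMk hmeas 1 2 0 (by decide) (by decide)
  have hYZ : μ.map (fun ω => (Y ω, Z ω)) =
      (gammaMeasure m_y (1 / s_y)).prod (gammaMeasure m_z (1 / s_z)) := by
    rw [← hYd, ← hZd]
    exact (hindep.indepFun (show (1 : Fin 3) ≠ 2 by decide)).map_prod_eq_prod_map_map
      hY.aemeasurable hZ.aemeasurable
  have hP := hYZ_X.measureReal_lt_eq_integral (hY.prodMk hZ) hX
    (g := fun w => θ * (w.1 + w.2 + c)) (by fun_prop)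
  rw [hXd, hYZ, integral_gammaMeasure_real_Ioi_mul_add_add hmx (by positivity) hθ.le hc.le
    (by positivity) (by positivity) (by positivity) (by positivity)] at hP
  refine hP.trans ?_
  rw [one_div_mul_eq_div, div_mul_eq_mul_div]
  simp only [one_div_rpow_mul_Gamma_div_eq, mul_assoc]
end
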